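/- arXiv:1802.08961 — 4 statements merged into one kernel-verified Lean document; each statement's English description precedes it below -/
import Mathlib

section
/- Let φ, ψ ∈ ℝⁿ and A = 𝟙𝟙ᵀ − (𝟙 − ψ)(𝟙 − φ)ᵀ. If v = s₁𝟙 + s₂(𝟙 − ψ) and 𝟙, 𝟙−ψ are linearly independent, then Av = λv if and only if nB(s₁,s₂)ᵀ = λ(s₁,s₂)ᵀ, where B = [[1, 1 − ⟨ψ⟩], [−1 + ⟨φ⟩, −1 + ⟨φ⟩ + ⟨ψ⟩ − ⟨φψ⟩]]. -/
/-!
Since `A = 𝟙𝟙ᵀ - (𝟙 - ψ)(𝟙 - φ)ᵀ` has rank at most two, `A v = ⟨𝟙, v⟩ 𝟙 - ⟨𝟙 - φ, v⟩ (𝟙 - ψ)`,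
so `A` maps the plane spanned by `𝟙` and `𝟙 - ψ` into itself, and `n B` is the matrix of this
restriction in the basis `𝟙, 𝟙 - ψ`. Linear independence makes coordinates in that basis unique,
so the eigen-equation for `A` is the eigen-equation for `n B`.
-/

open Matrix

lemma LinearIndependent.pair_smul_add_smul_eq_iff {R M : Type*} [Semiring R] [AddCommMonoid M]
    [Module R M] {x y : M} (h : LinearIndependent R ![x, y]) {w u : Fin 2 → R} :
    w 0 • x + w 1 • y = u 0 • x + u 1 • y ↔ w = u := by
  refine ⟨fun h' => ?_, fun h' => h' ▸ rfl⟩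
  obtain ⟨h₀, h₁⟩ := h.eq_of_pair h'
  ext i
  fin_cases i <;> assumption

lemma mulVec_smul_one_add_smul_one_sub {ι R : Type*} [Fintype ι] [CommRing R]
    (φ ψ : ι → R) (s₁ s₂ : R) :
    (vecMulVec 1 1 - vecMulVec (1 - ψ) (1 - φ)) *ᵥ (s₁ • 1 + s₂ • (1 - ψ)) =
      (Fintype.card ι * s₁ + (Fintype.card ι - ∑ i, ψ i) * s₂) • 1 +
        ((-Fintype.card ι + ∑ i, φ i) * s₁ +
          (-Fintype.card ι + ∑ i, φ i + ∑ i, ψ i - ∑ i, φ i * ψ i) * s₂) • (1 - ψ) := by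
  have hφψ : φ ⬝ᵥ ψ = ∑ i, φ i * ψ i := rfl
  simp only [sub_mulVec, vecMulVec_mulVec, op_smul_eq_smul, dotProduct_add, dotProduct_smul,
    sub_dotProduct, dotProduct_sub, one_dotProduct_one]
  simp only [one_dotProduct, dotProduct_one, hφψ, smul_eq_mul]
  module

lemma natCast_card_mul_one_div_mul_sum {ι : Type*} [Fintype ι] (f : ι → ℝ) :
    (Fintype.card ι : ℝ) * (1 / Fintype.card ι * ∑ i, f i) = ∑ i, f i := by
  rcases isEmpty_or_nonempty ι with hι | hι
  · simp
  · field_simp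

theorem stmt3_general (n : ℕ) (φ ψ : Fin n → ℝ) (s₁ s₂ lam : ℝ) :
    let one : Fin n → ℝ := fun _ => 1
    let A : Matrix (Fin n) (Fin n) ℝ := vecMulVec one one - vecMulVec (one - ψ) (one - φ)
    let avφ := (1 / (n : ℝ)) * ∑ i, φ i
    let avψ := (1 / (n : ℝ)) * ∑ i, ψ i
    let avφψ := (1 / (n : ℝ)) * ∑ i, φ i * ψ i
    let B : Matrix (Fin 2) (Fin 2) ℝ :=
      !![1, 1 - avψ; -1 + avφ, -1 + avφ + avψ - avφψ]
    let v : Fin n → ℝ := s₁ • one + s₂ • (one - ψ)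
    LinearIndependent ℝ ![one, one - ψ] →
      (A.mulVec v = lam • v ↔ ((n : ℝ) • B).mulVec ![s₁, s₂] = lam • ![s₁, s₂]) := by
  intro one A avφ avψ avφψ B v hLI
  set w := ((n : ℝ) • B) *ᵥ ![s₁, s₂]
  have hAv : A *ᵥ v = w 0 • one + w 1 • (one - ψ) := by
    refine (mulVec_smul_one_add_smul_one_sub φ ψ s₁ s₂).trans ?_
    have hav := natCast_card_mul_one_div_mul_sum (ι := Fin n)
    simp only [Fintype.card_fin] at hav ⊢
    simp only [w, B, avφ, avψ, avφψ, mulVec_fin_two, Matrix.smul_apply, of_apply, cons_val',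
      cons_val_zero, cons_val_one, cons_val_fin_one, smul_eq_mul]
    congr 2
    · linear_combination s₂ * hav ψ
    · linear_combination -(s₁ + s₂) * hav φ - s₂ * hav ψ + s₂ * hav (φ * ψ)
  have hv : lam • v = (lam • ![s₁, s₂]) 0 • one + (lam • ![s₁, s₂]) 1 • (one - ψ) := by
    simp [v, smul_add, smul_smul]
  rw [hAv, hv, hLI.pair_smul_add_smul_eq_iff]

/-- For A = 𝟙𝟙ᵀ − (𝟙−ψ)(𝟙−φ)ᵀ and v = s₁𝟙 + s₂(𝟙−ψ) with 𝟙, 𝟙−ψ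
linearly independent, Av = λv iff nB(s₁,s₂)ᵀ = λ(s₁,s₂)ᵀ. -/
theorem stmt3 (n : ℕ) (hn : 1 ≤ n) (φ ψ : Fin n → ℝ) (s₁ s₂ lam : ℝ) :
    let one : Fin n → ℝ := fun _ => 1
    let A : Matrix (Fin n) (Fin n) ℝ := vecMulVec one one - vecMulVec (one - ψ) (one - φ)
    let avφ := (1 / (n : ℝ)) * ∑ i, φ i
    let avψ := (1 / (n : ℝ)) * ∑ i, ψ i
    let avφψ := (1 / (n : ℝ)) * ∑ i, φ i * ψ i
    let B : Matrix (Fin 2) (Fin 2) ℝ :=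
      !![1, 1 - avψ; -1 + avφ, -1 + avφ + avψ - avφψ]
    let v : Fin n → ℝ := s₁ • one + s₂ • (one - ψ)
    LinearIndependent ℝ ![one, one - ψ] →
      (A.mulVec v = lam • v ↔ ((n : ℝ) • B).mulVec ![s₁, s₂] = lam • ![s₁, s₂]) :=
  stmt3_general n φ ψ s₁ s₂ lam
end

section
/- Let φ_i = m̄χ_i a_i and ψ_i = m̄π_i a_i where a_i, χ_i, π_i ∈ (0,1] and m̄ ∈ (0,1]. Then the spectral radius of the 2×2 matrix B = [[1, 1−⟨ψ⟩],[−1+⟨φ⟩, −1+⟨φ⟩+⟨ψ⟩−⟨φψ⟩]] equals m̄·κ, where κ = (⟨χ⟩ₐ + ⟨π⟩ₐ − m̄⟨χπ⟩_{a²} + √((⟨χ⟩ₐ + ⟨π⟩ₐ − m̄⟨χπ⟩_{a²})² + 4(⟨χπ⟩_{a²} − ⟨χ⟩ₐ⟨π⟩ₐ)))/2, with ⟨ξ⟩ₐ = (1/n)∑a_iξ_i and ⟨ξ⟩_{a²} = (1/n)∑a_i²ξ_i. -/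
/-!
The matrix `B` has trace `m̄ (⟨χ⟩ₐ + ⟨π⟩ₐ - m̄ ⟨χπ⟩_{a²})` and determinant `m̄² (⟨χ⟩ₐ⟨π⟩ₐ - ⟨χπ⟩_{a²})`,
so `m̄ κ` is the larger root of its characteristic polynomial. The discriminant is a sum of
nonnegative terms because `m̄⟨χ⟩ₐ, m̄⟨π⟩ₐ ≤ 1`, so both eigenvalues are real, and the trace is
nonnegative because `m̄⟨χπ⟩_{a²} ≤ ⟨χ⟩ₐ`; hence the larger root also has the larger modulus.
-/

open Matrix

/-- Spectral radius of a real square matrix: the supremum of the absolute values of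
its complex eigenvalues (roots of the characteristic polynomial over ℂ). -/
noncomputable def specRad {n : ℕ} (M : Matrix (Fin n) (Fin n) ℝ) : ℝ :=
  sSup {r : ℝ | ∃ μ : ℂ, (M.map (fun x => (x : ℂ))).charpoly.IsRoot μ ∧ r = ‖μ‖}

lemma isRoot_charpoly_map_ofReal_fin_two_iff (M : Matrix (Fin 2) (Fin 2) ℝ)
    (hdisc : 4 * M.det ≤ M.trace ^ 2) (μ : ℂ) :
    (M.map (fun x => (x : ℂ))).charpoly.IsRoot μ ↔
      μ = ((M.trace + √(M.trace ^ 2 - 4 * M.det)) / 2 : ℝ) ∨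
      μ = ((M.trace - √(M.trace ^ 2 - 4 * M.det)) / 2 : ℝ) := by
  have hs := Real.mul_self_sqrt (sub_nonneg.mpr hdisc)
  have hdiscrim : discrim (1 : ℂ) (-M.trace) M.det =
      (√(M.trace ^ 2 - 4 * M.det) : ℂ) * √(M.trace ^ 2 - 4 * M.det) := by
    rw [discrim]; exact_mod_cast (by rw [hs]; ring)
  have := quadratic_eq_zero_iff one_ne_zero hdiscrim μ
  rw [charpoly_fin_two, Polynomial.IsRoot]
  simp only [trace_fin_two, det_fin_two, map_apply, Polynomial.eval_add, Polynomial.eval_sub,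
    Polynomial.eval_mul, Polynomial.eval_pow, Polynomial.eval_C, Polynomial.eval_X] at this ⊢
  push_cast at this ⊢
  convert this using 2 <;> ring_nf

lemma specRad_fin_two_of_trace_nonneg (M : Matrix (Fin 2) (Fin 2) ℝ) (htr : 0 ≤ M.trace)
    (hdisc : 4 * M.det ≤ M.trace ^ 2) :
    specRad M = (M.trace + √(M.trace ^ 2 - 4 * M.det)) / 2 := by
  set s := √(M.trace ^ 2 - 4 * M.det)
  have hs : 0 ≤ s := Real.sqrt_nonneg _
  have hroots : {r : ℝ | ∃ μ : ℂ, (M.map (fun x => (x : ℂ))).charpoly.IsRoot μ ∧ r = ‖μ‖} =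
      {|(M.trace + s) / 2|, |(M.trace - s) / 2|} := by
    ext r
    simp only [isRoot_charpoly_map_ofReal_fin_two_iff M hdisc, Set.mem_ofPred_eq,
      Set.mem_insert_iff, Set.mem_singleton_iff]
    constructor
    · rintro ⟨μ, rfl | rfl, rfl⟩
      · exact Or.inl (Complex.norm_real _)
      · exact Or.inr (Complex.norm_real _)
    · rintro (rfl | rfl)
      · exact ⟨_, Or.inl rfl, (Complex.norm_real _).symm⟩
      · exact ⟨_, Or.inr rfl, (Complex.norm_real _).symm⟩
  rw [specRad, hroots, csSup_pair, abs_of_nonneg (by positivity), sup_eq_left]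
  exact abs_le.mpr ⟨by linarith, by linarith⟩

lemma specRad_moment_matrix {m u v w : ℝ} (hm : 0 ≤ m) (hw : 0 ≤ w) (hu : m * u ≤ 1)
    (hv : m * v ≤ 1) (hwuv : m * w ≤ u + v) :
    specRad !![1, 1 - m * v; -1 + m * u, -1 + m * u + m * v - m ^ 2 * w] =
      m * ((u + v - m * w + √((u + v - m * w) ^ 2 + 4 * (w - u * v))) / 2) := by
  set M : Matrix (Fin 2) (Fin 2) ℝ := !![1, 1 - m * v; -1 + m * u, -1 + m * u + m * v - m ^ 2 * w]
  have htr : M.trace = m * (u + v - m * w) := by simp [M, trace_fin_two]; ring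
  have hdet : M.det = m ^ 2 * (u * v - w) := by simp [M, det_fin_two]; ring
  -- the discriminant is (u - v)² + (m w)² + 2 w (1 - m u) + 2 w (1 - m v)
  have hdisc : 0 ≤ (u + v - m * w) ^ 2 + 4 * (w - u * v) := by
    nlinarith [sq_nonneg (u - v), sq_nonneg (m * w), mul_nonneg hw (sub_nonneg.mpr hu),
      mul_nonneg hw (sub_nonneg.mpr hv)]
  have hdiscr : M.trace ^ 2 - 4 * M.det = m ^ 2 * ((u + v - m * w) ^ 2 + 4 * (w - u * v)) := by
    rw [htr, hdet]; ring
  have htr_nonneg : 0 ≤ M.trace := htr ▸ mul_nonneg hm (by linarith)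
  have hdet_le : 4 * M.det ≤ M.trace ^ 2 :=
    sub_nonneg.mp (hdiscr ▸ mul_nonneg (sq_nonneg m) hdisc)
  rw [specRad_fin_two_of_trace_nonneg M htr_nonneg hdet_le, hdiscr,
    Real.sqrt_mul (sq_nonneg m), Real.sqrt_sq hm, htr]
  ring

lemma avg_le_avg {n : ℕ} {f g : Fin n → ℝ} (h : ∀ i, f i ≤ g i) :
    1 / (n : ℝ) * ∑ i, f i ≤ 1 / (n : ℝ) * ∑ i, g i :=
  mul_le_mul_of_nonneg_left (Finset.sum_le_sum fun i _ => h i) (by positivity)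

lemma avg_nonneg {n : ℕ} {f : Fin n → ℝ} (hf : ∀ i, 0 ≤ f i) : 0 ≤ 1 / (n : ℝ) * ∑ i, f i :=
  mul_nonneg (by positivity) (Finset.sum_nonneg fun i _ => hf i)

lemma avg_le_one {n : ℕ} {f : Fin n → ℝ} (hf : ∀ i, f i ≤ 1) : 1 / (n : ℝ) * ∑ i, f i ≤ 1 := by
  refine (avg_le_avg hf).trans ?_
  rcases n.eq_zero_or_pos with rfl | hn
  · simp
  · simp [hn.ne']

theorem stmt10_general (n : ℕ) (a χ π : Fin n → ℝ) (mbar : ℝ)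
    (ha : ∀ i, 0 < a i ∧ a i ≤ 1) (hχ : ∀ i, 0 < χ i ∧ χ i ≤ 1)
    (hπ : ∀ i, 0 < π i ∧ π i ≤ 1) (hm : 0 < mbar) (hm1 : mbar ≤ 1) :
    let φ : Fin n → ℝ := fun i => mbar * χ i * a i
    let ψ : Fin n → ℝ := fun i => mbar * π i * a i
    let avφ := (1 / (n : ℝ)) * ∑ i, φ i
    let avψ := (1 / (n : ℝ)) * ∑ i, ψ i
    let avφψ := (1 / (n : ℝ)) * ∑ i, φ i * ψ i
    let B : Matrix (Fin 2) (Fin 2) ℝ :=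
      !![1, 1 - avψ; -1 + avφ, -1 + avφ + avψ - avφψ]
    let χa := (1 / (n : ℝ)) * ∑ i, a i * χ i
    let πa := (1 / (n : ℝ)) * ∑ i, a i * π i
    let χπa2 := (1 / (n : ℝ)) * ∑ i, a i ^ 2 * (χ i * π i)
    let κ := (χa + πa - mbar * χπa2 +
      Real.sqrt ((χa + πa - mbar * χπa2) ^ 2 + 4 * (χπa2 - χa * πa))) / 2
    specRad B = mbar * κ := by
  intro φ ψ avφ avψ avφψ B χa πa χπa2 κ
  have hφ : avφ = mbar * χa := by
    simp only [avφ, χa, φ, Finset.mul_sum]; exact Finset.sum_congr rfl fun _ _ => by ring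
  have hψ : avψ = mbar * πa := by
    simp only [avψ, πa, ψ, Finset.mul_sum]; exact Finset.sum_congr rfl fun _ _ => by ring
  have hφψ : avφψ = mbar ^ 2 * χπa2 := by
    simp only [avφψ, χπa2, φ, ψ, Finset.mul_sum]; exact Finset.sum_congr rfl fun _ _ => by ring
  have hχa : 0 ≤ χa ∧ χa ≤ 1 := ⟨avg_nonneg fun i => mul_nonneg (ha i).1.le (hχ i).1.le,
    avg_le_one fun i => mul_le_one₀ (ha i).2 (hχ i).1.le (hχ i).2⟩
  have hπa : 0 ≤ πa ∧ πa ≤ 1 := ⟨avg_nonneg fun i => mul_nonneg (ha i).1.le (hπ i).1.le,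
    avg_le_one fun i => mul_le_one₀ (ha i).2 (hπ i).1.le (hπ i).2⟩
  have hχπa2 : 0 ≤ χπa2 :=
    avg_nonneg fun i => mul_nonneg (sq_nonneg _) (mul_nonneg (hχ i).1.le (hπ i).1.le)
  have hχπa2_le : χπa2 ≤ χa := avg_le_avg fun i => by
    nlinarith [mul_nonneg (mul_nonneg (ha i).1.le (hχ i).1.le)
      (sub_nonneg.mpr (mul_le_one₀ (ha i).2 (hπ i).1.le (hπ i).2))]
  show specRad !![1, 1 - avψ; -1 + avφ, -1 + avφ + avψ - avφψ] = mbar * κ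
  rw [hφ, hψ, hφψ]
  exact specRad_moment_matrix hm.le hχπa2 (mul_le_one₀ hm1 hχa.1 hχa.2)
    (mul_le_one₀ hm1 hπa.1 hπa.2)
    ((mul_le_of_le_one_left hχπa2 hm1).trans (hχπa2_le.trans (le_add_of_nonneg_right hπa.1)))

/-- With φᵢ = m̄χᵢaᵢ and ψᵢ = m̄πᵢaᵢ (aᵢ, χᵢ, πᵢ, m̄ ∈ (0,1]),
the spectral radius of B = [[1, 1−⟨ψ⟩],[−1+⟨φ⟩, −1+⟨φ⟩+⟨ψ⟩−⟨φψ⟩]] equals m̄·κ,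
where κ is given by the explicit formula in terms of the weighted averages. -/
theorem stmt10 (n : ℕ) (hn : 1 ≤ n) (a χ π : Fin n → ℝ) (mbar : ℝ)
    (ha : ∀ i, 0 < a i ∧ a i ≤ 1) (hχ : ∀ i, 0 < χ i ∧ χ i ≤ 1)
    (hπ : ∀ i, 0 < π i ∧ π i ≤ 1) (hm : 0 < mbar) (hm1 : mbar ≤ 1) :
    let φ : Fin n → ℝ := fun i => mbar * χ i * a i
    let ψ : Fin n → ℝ := fun i => mbar * π i * a i
    let avφ := (1 / (n : ℝ)) * ∑ i, φ i
    let avψ := (1 / (n : ℝ)) * ∑ i, ψ i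
    let avφψ := (1 / (n : ℝ)) * ∑ i, φ i * ψ i
    let B : Matrix (Fin 2) (Fin 2) ℝ :=
      !![1, 1 - avψ; -1 + avφ, -1 + avφ + avψ - avφψ]
    let χa := (1 / (n : ℝ)) * ∑ i, a i * χ i
    let πa := (1 / (n : ℝ)) * ∑ i, a i * π i
    let χπa2 := (1 / (n : ℝ)) * ∑ i, a i ^ 2 * (χ i * π i)
    let κ := (χa + πa - mbar * χπa2 +
      Real.sqrt ((χa + πa - mbar * χπa2) ^ 2 + 4 * (χπa2 - χa * πa))) / 2
    specRad B = mbar * κ :=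
  stmt10_general n a χ π mbar ha hχ hπ hm hm1
end

section
/- Fix P, S > 0 with P, S ≤ 1. Define, for q with PS ≤ q ≤ min(P,S), h(q) = (P + S − q + √((P + S − q)² + 4(q − PS)))/2, the larger root of (1−λ)q = (λ−P)(λ−S). Then h is strictly increasing in q on this interval. -/
/-!
`h q` is the larger root of `λ² - (P + S - q) λ + (P S - q) = (λ - P)(λ - S) - (1 - λ) q`.
The hypotheses force `P, S < 1`, so this quadratic is positive at `λ = 1`, to the right of its
vertex, whence `h q < 1`. Increasing `q` from `q₁` to `q₂` lowers the quadratic at `λ = h q₁` by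
`(1 - h q₁)(q₂ - q₁) > 0`, so `h q₁` lies strictly between the roots of the new quadratic.
-/

noncomputable def largerRoot (b c : ℝ) : ℝ := (b + Real.sqrt (b ^ 2 - 4 * c)) / 2

theorem largerRoot_isRoot {b c : ℝ} (hc : 4 * c ≤ b ^ 2) :
    largerRoot b c ^ 2 - b * largerRoot b c + c = 0 := by
  have hsq := Real.sq_sqrt (sub_nonneg.mpr hc)
  unfold largerRoot
  linear_combination hsq / 4

theorem lt_largerRoot_of_neg {b c x : ℝ} (hx : x ^ 2 - b * x + c < 0) : x < largerRoot b c := by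
  have : 2 * x - b < Real.sqrt (b ^ 2 - 4 * c) := Real.lt_sqrt_of_sq_lt (by nlinarith)
  unfold largerRoot
  linarith

theorem largerRoot_lt_of_pos {b c x : ℝ} (hb : b < 2 * x) (hx : 0 < x ^ 2 - b * x + c) :
    largerRoot b c < x := by
  have : Real.sqrt (b ^ 2 - 4 * c) < 2 * x - b :=
    (Real.sqrt_lt' (by linarith)).mpr (by nlinarith)
  unfold largerRoot
  linarith

theorem stmt11_general (P S : ℝ) (hP1 : P ≤ 1) (hS1 : S ≤ 1) :
    let h : ℝ → ℝ := fun q => (P + S - q + Real.sqrt ((P + S - q) ^ 2 + 4 * (q - P * S))) / 2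
    ∀ q₁ q₂ : ℝ, P * S ≤ q₁ → q₁ < q₂ → q₂ ≤ min P S → h q₁ < h q₂ := by
  intro h q₁ q₂ hq₁ hq₁₂ hq₂
  have hPS_P : P * S < P := by linarith [min_le_left P S]
  have hPS_S : P * S < S := by linarith [min_le_right P S]
  have hP_lt : P < 1 := by
    by_contra! hP; nlinarith
  have hS_lt : S < 1 := by
    by_contra! hS; nlinarith
  have h_eq (q : ℝ) : h q = largerRoot (P + S - q) (P * S - q) := by
    simp only [h, largerRoot]
    ring_nf
  set r := largerRoot (P + S - q₁) (P * S - q₁)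
  have hr_root : r ^ 2 - (P + S - q₁) * r + (P * S - q₁) = 0 :=
    largerRoot_isRoot (by nlinarith [sq_nonneg (P + S - q₁)])
  have hr_lt : r < 1 :=
    largerRoot_lt_of_pos (by nlinarith) (by nlinarith [mul_pos (sub_pos.2 hP_lt) (sub_pos.2 hS_lt)])
  rw [h_eq, h_eq]
  apply lt_largerRoot_of_neg
  nlinarith [mul_pos (sub_pos.2 hq₁₂) (sub_pos.2 hr_lt)]

/-- For fixed P, S ∈ (0,1], the larger-root function
h(q) = (P + S − q + √((P+S−q)² + 4(q−PS)))/2 is strictly increasing in q on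
the interval [PS, min(P,S)]. -/
theorem stmt11 (P S : ℝ) (hP : 0 < P) (hP1 : P ≤ 1) (hS : 0 < S) (hS1 : S ≤ 1) :
    let h : ℝ → ℝ := fun q => (P + S - q + Real.sqrt ((P + S - q) ^ 2 + 4 * (q - P * S))) / 2
    ∀ q₁ q₂ : ℝ, P * S ≤ q₁ → q₁ < q₂ → q₂ ≤ min P S → h q₁ < h q₂ :=
  stmt11_general P S hP1 hS1
end

section
/- Suppose p(t+1)_i ≤ (1−δ)p(t)_i + β∑_j [1 − (1−ψ_i)(1−φ_j)]p(t)_j for all i and t, where p(t) ≥ 0 entrywise, δ, β ∈ (0,1], φ_j, ψ_i ∈ [0,1]. If 1 − δ + βρ(A) < 1 where A = 𝟙𝟙ᵀ − (𝟙−ψ)(𝟙−φ)ᵀ, then p(t) → 0 as t → ∞. -/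
/-! Entrywise, `p (t + 1) ≤ M p t` for the nonnegative matrix `M = (1 - δ) I + β A`, so
`p t ≤ Mᵗ p 0`. The eigenvalues of `M` are `1 - δ + β μ` for the eigenvalues `μ` of `A`, hence lie
in the open unit disc, and Gelfand's formula then gives `Mᵗ → 0`. -/

open Matrix Filter

open Topology

section BanachAlgebra

variable {A : Type*} [NormedRing A] [NormedAlgebra ℂ A] [CompleteSpace A]

theorem spectralRadius_lt_one_of_forall_norm_lt_one {a : A}
    (ha : ∀ z ∈ spectrum ℂ a, ‖z‖ < 1) : spectralRadius ℂ a < 1 := by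
  rcases (spectrum ℂ a).eq_empty_or_nonempty with hempty | hne
  · simp [spectralRadius, hempty]
  · exact_mod_cast spectrum.spectralRadius_lt_of_forall_lt_of_nonempty hne (r := 1)
      fun z hz => by exact_mod_cast ha z hz

theorem tendsto_pow_atTop_nhds_zero_of_spectralRadius_lt_one {a : A}
    (ha : spectralRadius ℂ a < 1) : Tendsto (a ^ ·) atTop (𝓝 0) := by
  obtain ⟨r, hρr, hr1⟩ := ENNReal.lt_iff_exists_nnreal_btwn.mp ha
  have hbound : ∀ᶠ t : ℕ in atTop, ‖a ^ t‖ ≤ (r : ℝ) ^ t := by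
    filter_upwards [eventually_gt_atTop 0,
      (spectrum.pow_nnnorm_pow_one_div_tendsto_nhds_spectralRadius a).eventually_lt_const hρr]
      with t ht0 ht
    rw [one_div] at ht
    have := (ENNReal.rpow_inv_le_iff (by positivity)).mp ht.le
    rw [ENNReal.rpow_natCast, ← ENNReal.coe_pow, ENNReal.coe_le_coe] at this
    exact_mod_cast this
  exact squeeze_zero_norm' hbound
    (tendsto_pow_atTop_nhds_zero_of_lt_one r.coe_nonneg (by exact_mod_cast hr1))

end BanachAlgebra

namespace Matrix

variable {ι : Type*} [Fintype ι]

theorem mulVec_mono_of_nonneg {R : Type*} [Semiring R] [PartialOrder R] [IsOrderedRing R]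
    {M : Matrix ι ι R} (hM : ∀ i j, 0 ≤ M i j) {v w : ι → R} (hvw : v ≤ w) :
    M *ᵥ v ≤ M *ᵥ w := fun i =>
  Finset.sum_le_sum fun j _ => mul_le_mul_of_nonneg_left (hvw j) (hM i j)

variable [DecidableEq ι]

theorem le_pow_mulVec_of_le_mulVec {R : Type*} [Semiring R] [PartialOrder R] [IsOrderedRing R]
    {M : Matrix ι ι R} (hM : ∀ i j, 0 ≤ M i j) {p : ℕ → ι → R}
    (hstep : ∀ t, p (t + 1) ≤ M *ᵥ p t) (t : ℕ) : p t ≤ M ^ t *ᵥ p 0 := by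
  induction t with
  | zero => simp
  | succ t ih =>
    calc p (t + 1) ≤ M *ᵥ p t := hstep t
      _ ≤ M *ᵥ (M ^ t *ᵥ p 0) := mulVec_mono_of_nonneg hM ih
      _ = M ^ (t + 1) *ᵥ p 0 := by rw [mulVec_mulVec, pow_succ']

section LinftyOp

attribute [local instance] Matrix.linftyOpNormedRing Matrix.linftyOpNormedAlgebra

theorem tendsto_pow_atTop_nhds_zero_of_forall_norm_lt_one (M : Matrix ι ι ℝ)
    (hM : ∀ z ∈ spectrum ℂ (M.map (fun x => (x : ℂ))), ‖z‖ < 1) :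
    Tendsto (M ^ ·) atTop (𝓝 0) := by
  have hC : Tendsto (fun t : ℕ => (M ^ t).map (fun x => (x : ℂ))) atTop (𝓝 0) := by
    have hmap (t : ℕ) : (M ^ t).map (fun x => (x : ℂ)) = M.map (fun x => (x : ℂ)) ^ t :=
      map_pow (Complex.ofRealHom.mapMatrix (m := ι)) M t
    simp_rw [hmap]
    exact tendsto_pow_atTop_nhds_zero_of_spectralRadius_lt_one
      (spectralRadius_lt_one_of_forall_norm_lt_one hM)
  simpa [Function.comp_def] using
    ((continuous_id.matrix_map Complex.continuous_re).tendsto 0).comp hC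

end LinftyOp

end Matrix

theorem norm_le_specRad_of_mem_spectrum {n : ℕ} (A : Matrix (Fin n) (Fin n) ℝ) {μ : ℂ}
    (hμ : μ ∈ spectrum ℂ (A.map (fun x => (x : ℂ)))) : ‖μ‖ ≤ specRad A := by
  refine le_csSup ?_ ⟨μ, Matrix.mem_spectrum_iff_isRoot_charpoly.mp hμ, rfl⟩
  have hroots :=
    Polynomial.finite_setOfPred_isRoot (A.map (fun x => (x : ℂ))).charpoly_monic.ne_zero
  refine (hroots.image (fun μ : ℂ => ‖μ‖)).bddAbove.mono ?_
  rintro r ⟨μ, hμ, rfl⟩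
  exact ⟨μ, hμ, rfl⟩

theorem norm_lt_one_of_mem_spectrum_smul_one_add_smul {n : ℕ} (A : Matrix (Fin n) (Fin n) ℝ)
    {c β : ℝ} (hc : 0 ≤ c) (hβ : 0 < β) (hρ : c + β * specRad A < 1) :
    ∀ z ∈ spectrum ℂ ((c • 1 + β • A).map (fun x => (x : ℂ))), ‖z‖ < 1 := by
  have hmap : (c • 1 + β • A).map (fun x => (x : ℂ)) =
      algebraMap ℂ _ (c : ℂ) + (Units.mk0 (β : ℂ) (by exact_mod_cast hβ.ne')) •
        A.map (fun x => (x : ℂ)) := by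
    ext i j
    simp [Matrix.one_apply, Matrix.algebraMap_matrix_apply, apply_ite]
  rw [hmap, ← spectrum.singleton_add_eq, spectrum.unit_smul_eq_smul]
  rintro _ ⟨_, rfl, _, ⟨μ, hμ, rfl⟩, rfl⟩
  calc ‖(c : ℂ) + (β : ℂ) * μ‖ ≤ c + β * ‖μ‖ := by
        refine (norm_add_le _ _).trans_eq ?_
        rw [norm_mul, Complex.norm_of_nonneg hc, Complex.norm_of_nonneg hβ.le]
    _ ≤ c + β * specRad A := by gcongr; exact norm_le_specRad_of_mem_spectrum A hμ
    _ < 1 := hρ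

theorem stmt17_general (n : ℕ) (δ β : ℝ) (hδ1 : δ ≤ 1)
    (hβ : 0 < β) (φ ψ : Fin n → ℝ)
    (hφ : ∀ i, 0 ≤ φ i ∧ φ i ≤ 1) (hψ : ∀ i, 0 ≤ ψ i ∧ ψ i ≤ 1)
    (p : ℕ → Fin n → ℝ) (hp : ∀ t i, 0 ≤ p t i)
    (hstep : ∀ t i, p (t + 1) i ≤
      (1 - δ) * p t i + β * ∑ j, (1 - (1 - ψ i) * (1 - φ j)) * p t j) :
    let one : Fin n → ℝ := fun _ => 1
    let A : Matrix (Fin n) (Fin n) ℝ := vecMulVec one one - vecMulVec (one - ψ) (one - φ)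
    1 - δ + β * specRad A < 1 → Tendsto p atTop (nhds 0) := by
  intro one A hρ
  have hA : ∀ i j, A i j = 1 - (1 - ψ i) * (1 - φ j) := fun i j => by
    simp [A, one, vecMulVec_apply]
  have hc : 0 ≤ 1 - δ := sub_nonneg.mpr hδ1
  set M : Matrix (Fin n) (Fin n) ℝ := (1 - δ) • 1 + β • A
  have hM : ∀ i j, 0 ≤ M i j := fun i j => by
    have hAij : 0 ≤ A i j := by
      rw [hA, sub_nonneg]
      exact mul_le_one₀ (by linarith [(hψ i).1]) (by linarith [(hφ j).2])
        (by linarith [(hφ j).1])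
    simp only [M, Matrix.add_apply, Matrix.smul_apply, one_apply, smul_eq_mul]
    split_ifs <;> positivity
  have hstepM : ∀ t, p (t + 1) ≤ M *ᵥ p t := fun t i => by
    rw [add_mulVec, smul_mulVec, smul_mulVec, one_mulVec]
    simpa [mulVec, dotProduct, hA] using hstep t i
  have hmajorant : Tendsto (fun t => M ^ t *ᵥ p 0) atTop (𝓝 0) := by
    have hpow := tendsto_pow_atTop_nhds_zero_of_forall_norm_lt_one M
      (norm_lt_one_of_mem_spectrum_smul_one_add_smul A hc hβ hρ)
    simpa [Function.comp_def] using
      ((continuous_id.matrix_mulVec continuous_const).tendsto 0).comp hpow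
  refine tendsto_pi_nhds.mpr fun i => squeeze_zero (fun t => hp t i)
    (fun t => le_pow_mulVec_of_le_mulVec hM hstepM t i) ?_
  exact (continuous_apply i).tendsto 0 |>.comp hmajorant

/-- If p(t+1)ᵢ ≤ (1−δ)p(t)ᵢ + β∑ⱼ[1 − (1−ψᵢ)(1−φⱼ)]p(t)ⱼ with p(t) ≥ 0
entrywise, δ, β ∈ (0,1], φ, ψ ∈ [0,1]ⁿ, and 1 − δ + βρ(A) < 1 where
A = 𝟙𝟙ᵀ − (𝟙−ψ)(𝟙−φ)ᵀ, then p(t) → 0. -/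
theorem stmt17 (n : ℕ) (hn : 1 ≤ n) (δ β : ℝ) (hδ : 0 < δ) (hδ1 : δ ≤ 1)
    (hβ : 0 < β) (hβ1 : β ≤ 1) (φ ψ : Fin n → ℝ)
    (hφ : ∀ i, 0 ≤ φ i ∧ φ i ≤ 1) (hψ : ∀ i, 0 ≤ ψ i ∧ ψ i ≤ 1)
    (p : ℕ → Fin n → ℝ) (hp : ∀ t i, 0 ≤ p t i)
    (hstep : ∀ t i, p (t + 1) i ≤
      (1 - δ) * p t i + β * ∑ j, (1 - (1 - ψ i) * (1 - φ j)) * p t j) :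
    let one : Fin n → ℝ := fun _ => 1
    let A : Matrix (Fin n) (Fin n) ℝ := vecMulVec one one - vecMulVec (one - ψ) (one - φ)
    1 - δ + β * specRad A < 1 → Tendsto p atTop (nhds 0) :=
  stmt17_general n δ β hδ1 hβ φ ψ hφ hψ p hp hstep
end
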